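/- Let (P_n) be a sequence of orthogonal projections on H with P_n h → h for every h ∈ H, and for each n let C_n : H →L[ℂ] H be a bounded operator with ⟪C_n h, h⟫ = ∑'_γ w γ * ‖P_n (S γ h)‖² for all h ∈ H (the column operator compressed through P_n). Then ‖C_n‖ ≤ ‖C‖ for every n, and ‖C_n‖ → ‖C‖ = ∑'_γ w γ * ‖z γ‖² as n → ∞. -/

import Mathlib

/-!
Each shift satisfies `‖S γ‖ ≤ ‖z γ‖`: on the span of the orthogonal family `z` this is Pythagoras
together with the committee inequality, and that span is dense. Hence the real quadratic forms of
`C` and of every compression `Cn n` are bounded by `K * ‖h‖ ^ 2` with `K = ∑' γ, w γ * ‖z γ‖ ^ 2`,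
and for a symmetric operator such a bound on the form bounds the norm. Testing at the unit vector
`z 0`, where `S γ (z 0) = z γ`, gives `K ≤ ‖C‖` and `∑' γ, w γ * ‖P n (z γ)‖ ^ 2 ≤ ‖Cn n‖`; the
latter sums tend to `K` by dominated convergence.
-/

open Filter Topology
open scoped NNReal

section Orthogonal

variable {𝕜 E F ι : Type*} [RCLike 𝕜] [NormedAddCommGroup E] [InnerProductSpace 𝕜 E]
  [NormedAddCommGroup F] [InnerProductSpace 𝕜 F]

theorem norm_sum_smul_sq_of_pairwise_inner_eq_zero {v : ι → E}
    (hv : Pairwise fun i j => inner 𝕜 (v i) (v j) = 0) (c : ι → 𝕜) (s : Finset ι) :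
    ‖∑ i ∈ s, c i • v i‖ ^ 2 = ∑ i ∈ s, ‖c i‖ ^ 2 * ‖v i‖ ^ 2 := by
  classical
  have key : (inner 𝕜 (∑ i ∈ s, c i • v i) (∑ i ∈ s, c i • v i) : 𝕜)
      = ∑ i ∈ s, ((‖c i‖ ^ 2 * ‖v i‖ ^ 2 : ℝ) : 𝕜) := by
    simp_rw [sum_inner, inner_sum, inner_smul_left, inner_smul_right]
    refine Finset.sum_congr rfl fun i hi => ?_
    rw [Finset.sum_eq_single_of_mem i hi fun j _ hji => by rw [hv hji.symm, mul_zero, mul_zero],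
      inner_self_eq_norm_sq_to_K, ← mul_assoc, RCLike.conj_mul]
    push_cast; ring
  rw [inner_self_eq_norm_sq_to_K] at key
  exact_mod_cast key

theorem ContinuousLinearMap.opNorm_le_of_orthogonal_of_dense_span (T : E →L[𝕜] F)
    {v : ι → E} {u : ι → F} (hv : Pairwise fun i j => inner 𝕜 (v i) (v j) = 0)
    (hu : Pairwise fun i j => inner 𝕜 (u i) (u j) = 0)
    (hdense : (Submodule.span 𝕜 (Set.range v)).topologicalClosure = ⊤)
    (hT : ∀ i, T (v i) = u i) {c : ℝ} (hc : 0 ≤ c) (huv : ∀ i, ‖u i‖ ≤ c * ‖v i‖) :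
    ‖T‖ ≤ c := by
  have hspan : ∀ x ∈ Submodule.span 𝕜 (Set.range v), ‖T x‖ ≤ c * ‖x‖ := by
    intro x hx
    obtain ⟨a, rfl⟩ := Finsupp.mem_span_range_iff_exists_finsupp.mp hx
    rw [← pow_le_pow_iff_left₀ (norm_nonneg _) (by positivity) two_ne_zero, mul_pow,
      Finsupp.sum, map_sum]
    simp only [map_smul, hT]
    rw [norm_sum_smul_sq_of_pairwise_inner_eq_zero hu,
      norm_sum_smul_sq_of_pairwise_inner_eq_zero hv, Finset.mul_sum]
    refine Finset.sum_le_sum fun i _ => ?_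
    calc ‖a i‖ ^ 2 * ‖u i‖ ^ 2 ≤ ‖a i‖ ^ 2 * (c * ‖v i‖) ^ 2 := by gcongr; exact huv i
      _ = c ^ 2 * (‖a i‖ ^ 2 * ‖v i‖ ^ 2) := by ring
  refine T.opNorm_le_bound hc fun x => ?_
  have hclosed : IsClosed {x : E | ‖T x‖ ≤ c * ‖x‖} :=
    isClosed_le T.continuous.norm (continuous_const.mul continuous_norm)
  have hx : x ∈ (Submodule.span 𝕜 (Set.range v)).topologicalClosure := hdense ▸ trivial
  exact hclosed.closure_subset_iff.mpr hspan hx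

end Orthogonal

namespace ContinuousLinearMap

section Weighted

variable {𝕜 E F Γ : Type*} [NontriviallyNormedField 𝕜] [SeminormedAddCommGroup E]
  [NormedSpace 𝕜 E] [SeminormedAddCommGroup F] [NormedSpace 𝕜 F] {w : Γ → ℝ≥0}

theorem mul_norm_apply_sq_le {A : E →L[𝕜] F} {a : ℝ} (hA : ‖A‖ ≤ a) (r : ℝ≥0) (x : E) :
    (r : ℝ) * ‖A x‖ ^ 2 ≤ r * a ^ 2 * ‖x‖ ^ 2 := by
  rw [mul_assoc, ← mul_pow]
  gcongr
  exact A.le_of_opNorm_le hA x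

theorem tsum_mul_norm_apply_sq_le {A : Γ → E →L[𝕜] F} {a : Γ → ℝ} (hA : ∀ γ, ‖A γ‖ ≤ a γ)
    (hw : Summable fun γ => (w γ : ℝ) * a γ ^ 2) (x : E) :
    ∑' γ, (w γ : ℝ) * ‖A γ x‖ ^ 2 ≤ (∑' γ, (w γ : ℝ) * a γ ^ 2) * ‖x‖ ^ 2 := by
  rw [← tsum_mul_right]
  have hle := fun γ => mul_norm_apply_sq_le (hA γ) (w γ) x
  exact (hw.mul_right _).of_nonneg_of_le (fun γ => by positivity) hle |>.tsum_le_tsum hle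
    (hw.mul_right _)

theorem tendsto_tsum_mul_norm_apply_sq {ι : Type*} {l : Filter ι} {P : ι → E →L[𝕜] E}
    (hP : ∀ x, Tendsto (fun n => P n x) l (𝓝 x)) (hP_norm : ∀ n, ‖P n‖ ≤ 1) {v : Γ → E}
    (hw : Summable fun γ => (w γ : ℝ) * ‖v γ‖ ^ 2) :
    Tendsto (fun n => ∑' γ, (w γ : ℝ) * ‖P n (v γ)‖ ^ 2) l
      (𝓝 (∑' γ, (w γ : ℝ) * ‖v γ‖ ^ 2)) := by
  refine tendsto_tsum_of_dominated_convergence hw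
    (fun γ => ((hP (v γ)).norm.pow 2).const_mul _) (Eventually.of_forall fun n γ => ?_)
  rw [Real.norm_of_nonneg (by positivity)]
  simpa using mul_norm_apply_sq_le (hP_norm n) (w γ) (v γ)

end Weighted

section Complex

variable {E F Γ : Type*} [NormedAddCommGroup E] [InnerProductSpace ℂ E]
  [NormedAddCommGroup F] [NormedSpace ℂ F]

theorem isSymmetric_of_inner_apply_self_eq_ofReal {T : E →L[ℂ] E} {f : E → ℝ}
    (hT : ∀ x, inner ℂ (T x) x = (f x : ℂ)) : (T : E →ₗ[ℂ] E).IsSymmetric :=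
  (LinearMap.isSymmetric_iff_inner_map_self_real _).mpr fun x => by
    simp only [coe_coe, hT, Complex.conj_ofReal]

theorem opNorm_le_of_inner_apply_self_eq_ofReal {T : E →L[ℂ] E} {f : E → ℝ}
    (hT : ∀ x, inner ℂ (T x) x = (f x : ℂ)) {c : ℝ} (hc : 0 ≤ c)
    (hf : ∀ x, |f x| ≤ c * ‖x‖ ^ 2) : ‖T‖ ≤ c := by
  rw [norm_eq_iSup_rayleighQuotient T (isSymmetric_of_inner_apply_self_eq_ofReal hT)]
  refine ciSup_le fun x => ?_
  rw [rayleighQuotient, reApplyInnerSelf_apply, hT, RCLike.re_to_complex, Complex.ofReal_re,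
    abs_div, abs_sq]
  exact div_le_of_le_mul₀ (by positivity) hc (hf x)

theorem le_opNorm_of_inner_apply_self_eq_ofReal {T : E →L[ℂ] E} {f : E → ℝ}
    (hT : ∀ x, inner ℂ (T x) x = (f x : ℂ)) {x : E} (hx : ‖x‖ = 1) : f x ≤ ‖T‖ :=
  calc f x = RCLike.re (inner ℂ (T x) x) := by rw [hT, RCLike.re_to_complex, Complex.ofReal_re]
    _ ≤ ‖T x‖ * ‖x‖ := re_inner_le_norm _ _
    _ ≤ ‖T‖ := by simpa [hx] using T.le_opNorm x

theorem opNorm_le_tsum_of_inner_apply_self_eq_tsum {T : E →L[ℂ] E} {w : Γ → ℝ≥0}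
    {A : Γ → E →L[ℂ] F} (hT : ∀ x, inner ℂ (T x) x = ((∑' γ, (w γ : ℝ) * ‖A γ x‖ ^ 2 : ℝ) : ℂ))
    {a : Γ → ℝ} (hA : ∀ γ, ‖A γ‖ ≤ a γ) (hw : Summable fun γ => (w γ : ℝ) * a γ ^ 2) :
    ‖T‖ ≤ ∑' γ, (w γ : ℝ) * a γ ^ 2 :=
  opNorm_le_of_inner_apply_self_eq_ofReal hT (tsum_nonneg fun γ => by positivity) fun x => by
    rw [abs_of_nonneg (tsum_nonneg fun γ => by positivity)]
    exact tsum_mul_norm_apply_sq_le hA hw x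

end Complex

end ContinuousLinearMap

open ContinuousLinearMap

theorem stmt_13_general
    {H : Type*} [NormedAddCommGroup H] [InnerProductSpace ℂ H] [CompleteSpace H]
    {Γ : Type*} [AddCancelMonoid Γ]
    (z : Γ → H)
    (hz_orth : ∀ α β, α ≠ β → (inner ℂ (z α) (z β) : ℂ) = 0)
    (hz_dense : (Submodule.span ℂ (Set.range z)).topologicalClosure = ⊤)
    (hz0 : ‖z 0‖ = 1)
    (hcomm : ∀ α β, ‖z (α + β)‖ ≤ ‖z α‖ * ‖z β‖)
    (w : Γ → ℝ≥0)
    (hw : Summable fun γ => (w γ : ℝ) * ‖z γ‖ ^ 2)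
    (S : Γ → H →L[ℂ] H) (hS : ∀ γ β, S γ (z β) = z (γ + β))
    (C : H →L[ℂ] H)
    (hC : ∀ h : H, (inner ℂ (C h) h : ℂ)
        = ((∑' γ, (w γ : ℝ) * ‖S γ h‖ ^ 2 : ℝ) : ℂ))
    (P : ℕ → H →L[ℂ] H)
    (hP_idem : ∀ n, P n ∘L P n = P n)
    (hP_sa : ∀ n, ContinuousLinearMap.adjoint (P n) = P n)
    (hP_tend : ∀ h : H, Tendsto (fun n => P n h) atTop (nhds h))
    (Cn : ℕ → H →L[ℂ] H)
    (hCn : ∀ n, ∀ h : H, (inner ℂ (Cn n h) h : ℂ)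
        = ((∑' γ, (w γ : ℝ) * ‖P n (S γ h)‖ ^ 2 : ℝ) : ℂ)) :
    (∀ n, ‖Cn n‖ ≤ ‖C‖) ∧
      Tendsto (fun n => ‖Cn n‖) atTop (nhds ‖C‖) ∧
      ‖C‖ = ∑' γ, (w γ : ℝ) * ‖z γ‖ ^ 2 := by
  have hS_norm (γ : Γ) : ‖S γ‖ ≤ ‖z γ‖ :=
    (S γ).opNorm_le_of_orthogonal_of_dense_span hz_orth
      (fun _ _ h => hz_orth _ _ (h ∘ add_left_cancel)) hz_dense (hS γ) (norm_nonneg _) (hcomm γ)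
  have hP_norm (n : ℕ) : ‖P n‖ ≤ 1 :=
    IsStarProjection.norm_le _ ⟨hP_idem n, (star_eq_adjoint (P n)).trans (hP_sa n)⟩
  have hPS_norm (n : ℕ) (γ : Γ) : ‖P n ∘L S γ‖ ≤ ‖z γ‖ :=
    ((P n).opNorm_comp_le _ |>.trans (mul_le_of_le_one_left (norm_nonneg _) (hP_norm n))).trans
      (hS_norm γ)
  have hS_z0 (γ : Γ) : S γ (z 0) = z γ := by rw [hS, add_zero]
  have hC_norm : ‖C‖ = ∑' γ, (w γ : ℝ) * ‖z γ‖ ^ 2 :=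
    le_antisymm (opNorm_le_tsum_of_inner_apply_self_eq_tsum hC hS_norm hw)
      (by simpa only [hS_z0] using le_opNorm_of_inner_apply_self_eq_ofReal hC hz0)
  have hCn_le (n : ℕ) : ‖Cn n‖ ≤ ‖C‖ :=
    hC_norm ▸ opNorm_le_tsum_of_inner_apply_self_eq_tsum (hCn n) (hPS_norm n) hw
  have hCn_ge (n : ℕ) : ∑' γ, (w γ : ℝ) * ‖P n (z γ)‖ ^ 2 ≤ ‖Cn n‖ := by
    simpa only [hS_z0] using le_opNorm_of_inner_apply_self_eq_ofReal (hCn n) hz0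
  refine ⟨hCn_le, ?_, hC_norm⟩
  rw [hC_norm] at hCn_le ⊢
  exact tendsto_of_tendsto_of_tendsto_of_le_of_le
    (tendsto_tsum_mul_norm_apply_sq hP_tend hP_norm hw) tendsto_const_nhds hCn_ge hCn_le

/-- if orthogonal projections `P n` converge strongly to the identity and
`Cn n` is the column operator compressed through `P n`, then `‖Cn n‖ ≤ ‖C‖` for all `n` and
`‖Cn n‖ → ‖C‖ = ∑' γ, w γ * ‖z γ‖²`. -/
theorem stmt_13
    {H : Type*} [NormedAddCommGroup H] [InnerProductSpace ℂ H] [CompleteSpace H]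
    {Γ : Type*} [AddCancelMonoid Γ]
    (z : Γ → H)
    (hz_ne : ∀ α, z α ≠ 0)
    (hz_orth : ∀ α β, α ≠ β → (inner ℂ (z α) (z β) : ℂ) = 0)
    (hz_dense : (Submodule.span ℂ (Set.range z)).topologicalClosure = ⊤)
    (hz0 : ‖z 0‖ = 1)
    (hcomm : ∀ α β, ‖z (α + β)‖ ≤ ‖z α‖ * ‖z β‖)
    (w : Γ → ℝ≥0)
    (hw : Summable fun γ => (w γ : ℝ) * ‖z γ‖ ^ 2)
    (S : Γ → H →L[ℂ] H) (hS : ∀ γ β, S γ (z β) = z (γ + β))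
    (C : H →L[ℂ] H)
    (hC : ∀ h : H, (inner ℂ (C h) h : ℂ)
        = ((∑' γ, (w γ : ℝ) * ‖S γ h‖ ^ 2 : ℝ) : ℂ))
    (P : ℕ → H →L[ℂ] H)
    (hP_idem : ∀ n, P n ∘L P n = P n)
    (hP_sa : ∀ n, ContinuousLinearMap.adjoint (P n) = P n)
    (hP_tend : ∀ h : H, Tendsto (fun n => P n h) atTop (nhds h))
    (Cn : ℕ → H →L[ℂ] H)
    (hCn : ∀ n, ∀ h : H, (inner ℂ (Cn n h) h : ℂ)
        = ((∑' γ, (w γ : ℝ) * ‖P n (S γ h)‖ ^ 2 : ℝ) : ℂ)) :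
    (∀ n, ‖Cn n‖ ≤ ‖C‖) ∧
      Tendsto (fun n => ‖Cn n‖) atTop (nhds ‖C‖) ∧
      ‖C‖ = ∑' γ, (w γ : ℝ) * ‖z γ‖ ^ 2 :=
  stmt_13_general z hz_orth hz_dense hz0 hcomm w hw S hS C hC P hP_idem hP_sa hP_tend Cn hCn
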